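/- Let Ψ be the seminorm Ψ(v) = |∫_Ω div v dx| + |∫_Ω curl v dx| + |∫_Ω curl(curl v) dx| defined for smooth vector fields v on a bounded open set Ω ⊂ ℝ³, and suppose m(x) = 2(a·x)x − |x|²a + ρx + Qx + b is a conformal Killing field with Ψ(m) = 0. Then m is a constant vector field (a = 0, ρ = 0, Q = 0). Conversely, if m is constant then Ψ(m) = 0. -/

import Mathlib

/-!
For a conformal Killing field `m` all three integrands of `Ψ(m)` are explicit: `curl (curl m) = 8a`
is constant, `curl m = 4 a × x + curl (Q x)` and `div m = 6 a·x + 3ρ + tr Q`. Since `Ω` has positive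
finite measure, the vanishing of the last term of `Ψ(m)` forces `a = 0`. Then `curl m` and `div m` are
constant, so `Ψ(m) = 0` makes the skew matrix `Q` also symmetric, hence zero, and then `ρ = 0`.
Conversely a constant field has vanishing derivatives.
-/

open MeasureTheory Real Filter Matrix

noncomputable def pd (i : Fin 3) (f : (Fin 3 → ℝ) → ℝ) (x : Fin 3 → ℝ) : ℝ :=
  fderiv ℝ f x (Pi.single i 1)

def dot3 (a x : Fin 3 → ℝ) : ℝ := ∑ i, a i * x i

noncomputable def divg (w : (Fin 3 → ℝ) → Fin 3 → ℝ) (x : Fin 3 → ℝ) : ℝ :=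
  ∑ i, pd i (fun y => w y i) x

noncomputable def curl3 (w : (Fin 3 → ℝ) → Fin 3 → ℝ) (x : Fin 3 → ℝ) : Fin 3 → ℝ :=
  ![pd 1 (fun y => w y 2) x - pd 2 (fun y => w y 1) x,
    pd 2 (fun y => w y 0) x - pd 0 (fun y => w y 2) x,
    pd 0 (fun y => w y 1) x - pd 1 (fun y => w y 0) x]

noncomputable def tfsym (u : (Fin 3 → ℝ) → Fin 3 → ℝ) (x : Fin 3 → ℝ) (i j : Fin 3) : ℝ :=
  (pd i (fun y => u y j) x + pd j (fun y => u y i) x) / 2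
    - (1 / 3) * divg u x * (if i = j then 1 else 0)

/-- The conformal Killing field `x ↦ 2(a·x)x − |x|²a + ρx + Qx + b`. -/
def ckField (a b : Fin 3 → ℝ) (ρ : ℝ) (Q : Matrix (Fin 3) (Fin 3) ℝ) :
    (Fin 3 → ℝ) → Fin 3 → ℝ :=
  fun x j => 2 * dot3 a x * x j - dot3 x x * a j + ρ * x j + Q.mulVec x j + b j

/-- The seminorm Ψ(v) = |∫ div v| + |∫ curl v| + |∫ curl curl v| over Ω. -/
noncomputable def PsiSemi (Ω : Set (Fin 3 → ℝ))
    (v : (Fin 3 → ℝ) → Fin 3 → ℝ) : ℝ :=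
  |∫ x in Ω, divg v x| +
    Real.sqrt (∑ i, (∫ x in Ω, curl3 v x i) ^ 2) +
    Real.sqrt (∑ i, (∫ x in Ω, curl3 (curl3 v) x i) ^ 2)

section PartialDerivative

variable {f g : (Fin 3 → ℝ) → ℝ} {x : Fin 3 → ℝ} (i : Fin 3)

lemma pd_add (hf : DifferentiableAt ℝ f x) (hg : DifferentiableAt ℝ g x) :
    pd i (fun y => f y + g y) x = pd i f x + pd i g x := by
  simp [pd, fderiv_fun_add hf hg]

lemma pd_sub (hf : DifferentiableAt ℝ f x) (hg : DifferentiableAt ℝ g x) :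
    pd i (fun y => f y - g y) x = pd i f x - pd i g x := by
  simp [pd, fderiv_fun_sub hf hg]

lemma pd_mul (hf : DifferentiableAt ℝ f x) (hg : DifferentiableAt ℝ g x) :
    pd i (fun y => f y * g y) x = f x * pd i g x + g x * pd i f x := by
  simp [pd, fderiv_fun_mul hf hg]

lemma pd_sum {ι : Type*} (s : Finset ι) {F : ι → (Fin 3 → ℝ) → ℝ}
    (hF : ∀ k ∈ s, DifferentiableAt ℝ (F k) x) :
    pd i (fun y => ∑ k ∈ s, F k y) x = ∑ k ∈ s, pd i (F k) x := by
  simp [pd, fderiv_fun_sum hF]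

lemma pd_const (c : ℝ) : pd i (fun _ => c) x = 0 := by
  simp [pd]

lemma pd_apply (k : Fin 3) : pd i (fun y => y k) x = if i = k then 1 else 0 := by
  rw [pd, (hasFDerivAt_apply k x).fderiv]
  simp [Pi.single_apply, eq_comm]

end PartialDerivative

lemma pd_ckField (a b : Fin 3 → ℝ) (ρ : ℝ) (Q : Matrix (Fin 3) (Fin 3) ℝ) (i j : Fin 3)
    (x : Fin 3 → ℝ) :
    pd i (fun y => ckField a b ρ Q y j) x =
      2 * a i * x j + 2 * dot3 a x * (if i = j then 1 else 0)
        - 2 * x i * a j + ρ * (if i = j then 1 else 0) + Q j i := by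
  simp (disch := fun_prop) only [ckField, dot3, mulVec, dotProduct, pd_add, pd_sub, pd_mul, pd_sum,
    pd_const, pd_apply]
  simp [Finset.sum_add_distrib]
  ring

lemma divg_ckField (a b : Fin 3 → ℝ) (ρ : ℝ) (Q : Matrix (Fin 3) (Fin 3) ℝ) (x : Fin 3 → ℝ) :
    divg (ckField a b ρ Q) x = 6 * dot3 a x + 3 * ρ + Q.trace := by
  simp only [divg, pd_ckField, trace, diag, Fin.sum_univ_three]
  simp [dot3, Fin.sum_univ_three]
  ring

def curlOfLinear (A : Matrix (Fin 3) (Fin 3) ℝ) : Fin 3 → ℝ :=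
  ![A 2 1 - A 1 2, A 0 2 - A 2 0, A 1 0 - A 0 1]

lemma curl3_ckField (a b : Fin 3 → ℝ) (ρ : ℝ) (Q : Matrix (Fin 3) (Fin 3) ℝ) (x : Fin 3 → ℝ) :
    curl3 (ckField a b ρ Q) x = (4 : ℝ) • a ⨯₃ x + curlOfLinear Q := by
  ext i
  fin_cases i <;> simp [curl3, pd_ckField, cross_apply, curlOfLinear] <;> ring

lemma curl3_smul_cross_add_const (c : ℝ) (a v x : Fin 3 → ℝ) :
    curl3 (fun y => c • a ⨯₃ y + v) x = (2 * c) • a := by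
  ext i
  fin_cases i <;>
    simp (disch := fun_prop) [curl3, cross_apply, pd_add, pd_sub, pd_mul, pd_const, pd_apply] <;>
    ring

lemma curl3_curl3_ckField (a b : Fin 3 → ℝ) (ρ : ℝ) (Q : Matrix (Fin 3) (Fin 3) ℝ)
    (x : Fin 3 → ℝ) : curl3 (curl3 (ckField a b ρ Q)) x = (8 : ℝ) • a := by
  simp only [funext (curl3_ckField a b ρ Q), curl3_smul_cross_add_const]
  norm_num

lemma curlOfLinear_eq_zero_iff (A : Matrix (Fin 3) (Fin 3) ℝ) : curlOfLinear A = 0 ↔ Aᵀ = A := by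
  constructor
  · intro h
    have h0 := congrFun h 0
    have h1 := congrFun h 1
    have h2 := congrFun h 2
    simp only [curlOfLinear, Pi.zero_apply, cons_val, sub_eq_zero] at h0 h1 h2
    ext i j
    fin_cases i <;> fin_cases j <;> simp [*]
  · intro h
    ext i
    fin_cases i <;> simp [curlOfLinear, ← congrFun₂ h 1 2, ← congrFun₂ h 0 2, ← congrFun₂ h 0 1]

lemma ckField_zero (b : Fin 3 → ℝ) : ckField 0 b 0 0 = fun _ => b := by
  ext x j
  simp [ckField, dot3]

lemma sqrt_sum_sq_eq_zero_iff {ι : Type*} [Fintype ι] (f : ι → ℝ) :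
    √(∑ i, f i ^ 2) = 0 ↔ ∀ i, f i = 0 := by
  rw [Real.sqrt_eq_zero (Finset.sum_nonneg fun i _ => sq_nonneg (f i)),
    Finset.sum_eq_zero_iff_of_nonneg fun i _ => sq_nonneg (f i)]
  simp

lemma psiSemi_eq_zero_iff (Ω : Set (Fin 3 → ℝ)) (v : (Fin 3 → ℝ) → Fin 3 → ℝ) :
    PsiSemi Ω v = 0 ↔ ∫ x in Ω, divg v x = 0 ∧ (∀ i, ∫ x in Ω, curl3 v x i = 0) ∧
      ∀ i, ∫ x in Ω, curl3 (curl3 v) x i = 0 := by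
  rw [PsiSemi, add_eq_zero_iff_of_nonneg (by positivity) (by positivity),
    add_eq_zero_iff_of_nonneg (by positivity) (by positivity), abs_eq_zero,
    sqrt_sum_sq_eq_zero_iff, sqrt_sum_sq_eq_zero_iff, and_assoc]

lemma psiSemi_const (Ω : Set (Fin 3 → ℝ)) (b : Fin 3 → ℝ) : PsiSemi Ω (fun _ => b) = 0 := by
  have hcurl : ∀ c : Fin 3 → ℝ, curl3 (fun _ => c) = fun _ => 0 := by
    intro c
    ext x i
    fin_cases i <;> simp [curl3, pd_const]
  simp [psiSemi_eq_zero_iff, divg, pd_const, hcurl]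

theorem stmt18_general (Ω : Set (Fin 3 → ℝ))
    (hΩb : Bornology.IsBounded Ω) (hΩpos : 0 < MeasureTheory.volume Ω)
    (a b : Fin 3 → ℝ) (ρ : ℝ) (Q : Matrix (Fin 3) (Fin 3) ℝ) (hQ : Qᵀ = -Q) :
    (PsiSemi Ω (ckField a b ρ Q) = 0 →
      a = 0 ∧ ρ = 0 ∧ Q = 0 ∧ ∀ x, ckField a b ρ Q x = b)
    ∧ ((a = 0 ∧ ρ = 0 ∧ Q = 0) → PsiSemi Ω (ckField a b ρ Q) = 0) := by
  have hΩ : volume.real Ω ≠ 0 := (measureReal_ne_zero_iff hΩb.measure_lt_top.ne).2 hΩpos.ne'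
  refine ⟨fun hΨ => ?_, ?_⟩
  · obtain ⟨hdiv, hcurl, hcurlcurl⟩ := (psiSemi_eq_zero_iff Ω _).1 hΨ
    obtain rfl : a = 0 := by
      ext i
      simpa [curl3_curl3_ckField, hΩ] using hcurlcurl i
    obtain rfl : Q = 0 := by
      have hsymm : Qᵀ = Q := (curlOfLinear_eq_zero_iff Q).1 <| by
        ext i
        simpa [curl3_ckField, hΩ] using hcurl i
      ext i j
      exact self_eq_neg.1 (congrFun₂ (hsymm.symm.trans hQ) i j)
    obtain rfl : ρ = 0 := by simpa [divg_ckField, dot3, hΩ] using hdiv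
    exact ⟨rfl, rfl, rfl, by simp [ckField_zero]⟩
  · rintro ⟨rfl, rfl, rfl⟩
    rw [ckField_zero]
    exact psiSemi_const Ω b

theorem stmt18 (Ω : Set (Fin 3 → ℝ)) (hΩo : IsOpen Ω)
    (hΩb : Bornology.IsBounded Ω) (hΩpos : 0 < MeasureTheory.volume Ω)
    (a b : Fin 3 → ℝ) (ρ : ℝ) (Q : Matrix (Fin 3) (Fin 3) ℝ) (hQ : Qᵀ = -Q) :
    (PsiSemi Ω (ckField a b ρ Q) = 0 →
      a = 0 ∧ ρ = 0 ∧ Q = 0 ∧ ∀ x, ckField a b ρ Q x = b)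
    ∧ ((a = 0 ∧ ρ = 0 ∧ Q = 0) → PsiSemi Ω (ckField a b ρ Q) = 0) :=
  stmt18_general Ω hΩb hΩpos a b ρ Q hQ
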